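/- Let p ∈ (0,1) and let X ~ Bernoulli(p) be defined on a probability space (Ω, F, P). Let B_1, B_2, ... be a sequence of events on the same space with P(B_n) → 1 as n → ∞, and let Y be a random vector (or matrix) on the same space (possibly depending on n). Then I(X; Y) → 0 as n → ∞ if and only if I(X; Y | B_n) → 0 as n → ∞, where I(X; Y | B_n) denotes the mutual information computed under the conditional probability measure given B_n. -/

import Mathlib

/-!
`I(X;Y) = h(P(X = 1)) - E[h(P(X = 1 | Y))]`, so it suffices that each of the two terms moves by
`o(1)` when `μ` is replaced by `μ[|B]`.  Passing to `μ[|B]` moves the integral of a function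
bounded by `C` by at most `2 C μ(Bᶜ)`.  The conditional expectations of `f = 1{X = 1}` under `μ`
and under `μ[|B]` both integrate like `f` over every `σ(Y)`-measurable set, so the set integrals
of their difference are `O(μ(Bᶜ))`, and hence so is its `L¹(μ[|B])` norm.  Finally, uniform
continuity of `h` on `[0, 1]` in the form `|h a - h b| ≤ ε + K_ε |a - b|` carries this
`L¹` estimate over to the entropy terms.
-/

open Filter Set MeasureTheory ProbabilityTheory

noncomputable section

/-- The Bernoulli distribution with parameter `p` on `Bool`. -/
def bernoulliBool (p : ℝ) : Measure Bool :=
  ENNReal.ofReal p • Measure.dirac true + ENNReal.ofReal (1 - p) • Measure.dirac false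

/-- Mutual information `I(X; Y)` between a `Bool`-valued random variable `X` and an arbitrary
random vector `Y`, under the probability measure `μ`:
`I(X;Y) = H(X) - H(X|Y)`, where `H(X) = h(P(X = 1))` with `h` the binary entropy function,
and `H(X|Y) = E[h(P(X = 1 | Y))]` with `P(X = 1 | Y)` the conditional probability of
`{X = 1}` given the σ-algebra generated by `Y`. -/
def miBool {Ω : Type*} {mΩ : MeasurableSpace Ω} (μ : Measure Ω)
    {E : Type*} [MeasurableSpace E] (X : Ω → Bool) (Y : Ω → E) : ℝ :=
  Real.binEntropy (μ {ω | X ω = true}).toReal -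
    ∫ ω, Real.binEntropy
      ((μ[(fun ω' => if X ω' then (1:ℝ) else 0) | MeasurableSpace.comap Y inferInstance]) ω) ∂μ

open Topology

lemma IsCompact.exists_dist_le_add_mul_dist {α β : Type*} [PseudoMetricSpace α]
    [PseudoMetricSpace β] {s : Set α} (hs : IsCompact s) {φ : α → β} (hφ : ContinuousOn φ s)
    {ε : ℝ} (hε : 0 < ε) :
    ∃ K, 0 ≤ K ∧ ∀ a ∈ s, ∀ b ∈ s, dist (φ a) (φ b) ≤ ε + K * dist a b := by
  obtain ⟨δ, hδ, hφδ⟩ :=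
    Metric.uniformContinuousOn_iff.1 (hs.uniformContinuousOn_of_continuous hφ) ε hε
  set D := Metric.diam (φ '' s)
  have hK : 0 ≤ D / δ := div_nonneg Metric.diam_nonneg hδ.le
  refine ⟨D / δ, hK, fun a ha b hb => ?_⟩
  rcases lt_or_ge (dist a b) δ with hab | hab
  · exact (hφδ a ha b hb hab).le.trans (le_add_of_nonneg_right (mul_nonneg hK dist_nonneg))
  · have hD : dist (φ a) (φ b) ≤ D := Metric.dist_le_diam_of_mem
      (hs.image_of_continuousOn hφ).isBounded (mem_image_of_mem φ ha) (mem_image_of_mem φ hb)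
    have : D ≤ D / δ * dist a b := by
      rw [div_mul_eq_mul_div, le_div_iff₀ hδ]
      exact mul_le_mul_of_nonneg_left hab Metric.diam_nonneg
    linarith

lemma integral_abs_le_of_abs_setIntegral_le {Ω : Type*} {m mΩ : MeasurableSpace Ω}
    {ν : Measure Ω} {W : Ω → ℝ}
    (hWm : StronglyMeasurable[m] W) (hW : Integrable W ν) {c : ℝ}
    (hc : ∀ A, MeasurableSet[m] A → |∫ x in A, W x ∂ν| ≤ c) :
    ∫ x, |W x| ∂ν ≤ 2 * c := by
  have hpos := hc {x | 0 ≤ W x} (measurableSet_le measurable_const hWm.measurable)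
  have hneg := hc {x | W x ≤ 0} (measurableSet_le hWm.measurable measurable_const)
  simp_rw [← Real.norm_eq_abs, integral_norm_eq_pos_sub_neg hW]
  linarith [le_abs_self (∫ x in {x | 0 ≤ W x}, W x ∂ν),
    neg_abs_le (∫ x in {x | W x ≤ 0}, W x ∂ν)]

lemma ae_condExp_mem_Icc_zero {Ω : Type*} {m mΩ : MeasurableSpace Ω} {μ : Measure Ω}
    {f : Ω → ℝ} {c : ℝ} (hc : 0 ≤ c) (hf : ∀ᵐ x ∂μ, f x ∈ Icc 0 c) :
    ∀ᵐ x ∂μ, μ[f|m] x ∈ Icc 0 c := by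
  filter_upwards [condExp_nonneg (m := m) (hf.mono fun x hx => hx.1),
    condExp_le_nonneg_const (m := m) hc (hf.mono fun x hx => hx.2)] with x h0 h1
  exact ⟨h0, h1⟩

section CondMeasure

variable {Ω E : Type*} {m mΩ : MeasurableSpace Ω} {μ : Measure Ω} [IsProbabilityMeasure μ]
  {B : Set Ω} [NormedAddCommGroup E] [NormedSpace ℝ E]

lemma norm_integral_sub_integral_cond_le (hB : MeasurableSet B) (hB0 : μ B ≠ 0) {g : Ω → E}
    {C : ℝ} (hgm : AEStronglyMeasurable g μ) (hgC : ∀ᵐ x ∂μ, ‖g x‖ ≤ C) :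
    ‖∫ x, g x ∂μ - ∫ x, g x ∂μ[|B]‖ ≤ 2 * C * μ.real Bᶜ := by
  set q := μ.real B
  have hq0 : 0 < q := ENNReal.toReal_pos hB0 (measure_ne_top _ _)
  have hq1 : 1 ≤ q⁻¹ := (one_le_inv₀ hq0).2 measureReal_le_one
  have hBc : μ.real Bᶜ = 1 - q := probReal_compl_eq_one_sub hB
  have hI : ‖∫ x in B, g x ∂μ‖ ≤ C * q :=
    norm_setIntegral_le_of_norm_le_const_ae (measure_lt_top _ _) (ae_restrict_of_ae hgC)
  have hJ : ‖∫ x in Bᶜ, g x ∂μ‖ ≤ C * μ.real Bᶜ :=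
    norm_setIntegral_le_of_norm_le_const_ae (measure_lt_top _ _) (ae_restrict_of_ae hgC)
  have hsplit : ∫ x, g x ∂μ - ∫ x, g x ∂μ[|B]
      = (1 - q⁻¹) • ∫ x in B, g x ∂μ + ∫ x in Bᶜ, g x ∂μ := by
    rw [← integral_add_compl hB (.of_bound hgm C hgC), ProbabilityTheory.cond,
      integral_smul_measure, ENNReal.toReal_inv, sub_smul, one_smul]
    abel
  calc ‖∫ x, g x ∂μ - ∫ x, g x ∂μ[|B]‖
      ≤ (q⁻¹ - 1) * ‖∫ x in B, g x ∂μ‖ + ‖∫ x in Bᶜ, g x ∂μ‖ := by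
        rw [hsplit]
        refine (norm_add_le _ _).trans_eq ?_
        rw [norm_smul, Real.norm_eq_abs, abs_of_nonpos]
        · ring
        · linarith
    _ ≤ (q⁻¹ - 1) * (C * q) + C * μ.real Bᶜ := by gcongr
    _ = 2 * C * μ.real Bᶜ := by
        rw [hBc]; field_simp; ring

lemma norm_setIntegral_sub_setIntegral_cond_le (hB : MeasurableSet B) (hB0 : μ B ≠ 0)
    {A : Set Ω} (hA : MeasurableSet A) {g : Ω → E} {C : ℝ} (hgm : AEStronglyMeasurable g μ)
    (hgC : ∀ᵐ x ∂μ, ‖g x‖ ≤ C) :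
    ‖∫ x in A, g x ∂μ - ∫ x in A, g x ∂μ[|B]‖ ≤ 2 * C * μ.real Bᶜ := by
  rw [← integral_indicator hA, ← integral_indicator hA]
  refine norm_integral_sub_integral_cond_le hB hB0 (hgm.indicator hA) ?_
  filter_upwards [hgC] with x hx using (norm_indicator_le_norm_self g x).trans hx

variable [CompleteSpace E]

lemma norm_setIntegral_condExp_sub_condExp_cond_le (hm : m ≤ mΩ) (hB : MeasurableSet B)
    (hB0 : μ B ≠ 0) {f : Ω → E} {R : ℝ} (hfm : AEStronglyMeasurable f μ)
    (hfR : ∀ᵐ x ∂μ, ‖f x‖ ≤ R) {A : Set Ω} (hA : MeasurableSet[m] A) :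
    ‖∫ x in A, (μ[f|m] x - μ[|B][f|m] x) ∂μ[|B]‖ ≤ 4 * R * μ.real Bᶜ := by
  have : IsProbabilityMeasure μ[|B] := cond_isProbabilityMeasure hB0
  have hf : Integrable f μ := .of_bound hfm R hfR
  have hfB : Integrable f μ[|B] :=
    .of_bound (hfm.mono_ac cond_absolutelyContinuous) R (cond_absolutelyContinuous.ae_le hfR)
  have hZm : AEStronglyMeasurable (μ[f|m]) μ := integrable_condExp.aestronglyMeasurable
  have hZR : ∀ᵐ x ∂μ, ‖μ[f|m] x‖ ≤ R := ae_bdd_norm_condExp_of_ae_bdd_norm hfR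
  have hZB : Integrable (μ[f|m]) μ[|B] :=
    .of_bound (hZm.mono_ac cond_absolutelyContinuous) R (cond_absolutelyContinuous.ae_le hZR)
  have hsplit : ∫ x in A, (μ[f|m] x - μ[|B][f|m] x) ∂μ[|B]
      = (∫ x in A, f x ∂μ - ∫ x in A, f x ∂μ[|B])
        - (∫ x in A, μ[f|m] x ∂μ - ∫ x in A, μ[f|m] x ∂μ[|B]) := by
    rw [integral_sub hZB.integrableOn integrable_condExp.integrableOn,
      setIntegral_condExp hm hfB hA, setIntegral_condExp hm hf hA]
    abel
  calc ‖∫ x in A, (μ[f|m] x - μ[|B][f|m] x) ∂μ[|B]‖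
      ≤ 2 * R * μ.real Bᶜ + 2 * R * μ.real Bᶜ := by
        rw [hsplit]
        exact (norm_sub_le _ _).trans (add_le_add
          (norm_setIntegral_sub_setIntegral_cond_le hB hB0 (hm _ hA) hfm hfR)
          (norm_setIntegral_sub_setIntegral_cond_le hB hB0 (hm _ hA) hZm hZR))
    _ = 4 * R * μ.real Bᶜ := by ring

lemma integral_abs_condExp_sub_condExp_cond_le (hm : m ≤ mΩ) (hB : MeasurableSet B)
    (hB0 : μ B ≠ 0) {f : Ω → ℝ} {R : ℝ} (hfm : AEStronglyMeasurable f μ)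
    (hfR : ∀ᵐ x ∂μ, |f x| ≤ R) :
    ∫ x, |μ[f|m] x - μ[|B][f|m] x| ∂μ[|B] ≤ 8 * R * μ.real Bᶜ := by
  have hZB : Integrable (μ[f|m]) μ[|B] :=
    .of_bound (integrable_condExp.aestronglyMeasurable.mono_ac cond_absolutelyContinuous) R
      (cond_absolutelyContinuous.ae_le (ae_bdd_norm_condExp_of_ae_bdd_norm hfR))
  refine (integral_abs_le_of_abs_setIntegral_le (W := fun x => μ[f|m] x - μ[|B][f|m] x)
    (stronglyMeasurable_condExp.sub stronglyMeasurable_condExp) (hZB.sub integrable_condExp)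
    fun A hA => norm_setIntegral_condExp_sub_condExp_cond_le hm hB hB0 hfm hfR hA).trans_eq ?_
  ring

lemma abs_integral_comp_condExp_sub_cond_le (hm : m ≤ mΩ) (hB : MeasurableSet B)
    (hB0 : μ B ≠ 0) {φ : ℝ → ℝ} (hφ : Continuous φ) {M ε K : ℝ}
    (hM : ∀ t ∈ Icc (0 : ℝ) 1, |φ t| ≤ M) (hK : 0 ≤ K)
    (hφK : ∀ a ∈ Icc (0 : ℝ) 1, ∀ b ∈ Icc (0 : ℝ) 1, |φ a - φ b| ≤ ε + K * |a - b|)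
    {f : Ω → ℝ} (hfm : AEStronglyMeasurable f μ) (hf : ∀ᵐ x ∂μ, f x ∈ Icc 0 1) :
    |∫ x, φ (μ[f|m] x) ∂μ - ∫ x, φ (μ[|B][f|m] x) ∂μ[|B]|
      ≤ ε + (2 * M + 8 * K) * μ.real Bᶜ := by
  have : IsProbabilityMeasure μ[|B] := cond_isProbabilityMeasure hB0
  set Z := μ[f|m]
  set ZB := μ[|B][f|m]
  have hZ : ∀ᵐ x ∂μ, Z x ∈ Icc 0 1 := ae_condExp_mem_Icc_zero zero_le_one hf
  have hZB : ∀ᵐ x ∂μ[|B], ZB x ∈ Icc 0 1 :=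
    ae_condExp_mem_Icc_zero zero_le_one (cond_absolutelyContinuous.ae_le hf)
  have hZi : Integrable Z μ[|B] :=
    .of_bound (integrable_condExp.aestronglyMeasurable.mono_ac cond_absolutelyContinuous) 1
      (cond_absolutelyContinuous.ae_le (hZ.mono fun x hx => abs_le.2 ⟨by linarith [hx.1], hx.2⟩))
  have hdi : Integrable (fun x => |Z x - ZB x|) μ[|B] := (hZi.sub integrable_condExp).abs
  have hφZm : AEStronglyMeasurable (fun x => φ (Z x)) μ :=
    hφ.comp_aestronglyMeasurable integrable_condExp.aestronglyMeasurable
  have hφZM : ∀ᵐ x ∂μ, ‖φ (Z x)‖ ≤ M := hZ.mono fun x hx => hM _ hx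
  have hφZ : Integrable (fun x => φ (Z x)) μ[|B] :=
    .of_bound (hφZm.mono_ac cond_absolutelyContinuous) M (cond_absolutelyContinuous.ae_le hφZM)
  have hφZB : Integrable (fun x => φ (ZB x)) μ[|B] :=
    .of_bound (hφ.comp_aestronglyMeasurable integrable_condExp.aestronglyMeasurable) M
      (hZB.mono fun x hx => hM _ hx)
  have hL1 : ∫ x, |Z x - ZB x| ∂μ[|B] ≤ 8 * μ.real Bᶜ := by
    simpa using integral_abs_condExp_sub_condExp_cond_le hm hB hB0 hfm
      (hf.mono fun x hx => abs_le.2 ⟨by linarith [hx.1], hx.2⟩)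
  have hchange : |∫ x, φ (Z x) ∂μ - ∫ x, φ (Z x) ∂μ[|B]| ≤ 2 * M * μ.real Bᶜ :=
    norm_integral_sub_integral_cond_le hB hB0 hφZm hφZM
  have hcomp : |∫ x, φ (Z x) ∂μ[|B] - ∫ x, φ (ZB x) ∂μ[|B]|
      ≤ ε + K * ∫ x, |Z x - ZB x| ∂μ[|B] := by
    rw [← integral_sub hφZ hφZB]
    calc |∫ x, (φ (Z x) - φ (ZB x)) ∂μ[|B]|
        ≤ ∫ x, |φ (Z x) - φ (ZB x)| ∂μ[|B] := abs_integral_le_integral_abs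
      _ ≤ ∫ x, (ε + K * |Z x - ZB x|) ∂μ[|B] := by
          refine integral_mono_ae (hφZ.sub hφZB).abs
            ((integrable_const ε).add (hdi.const_mul K)) ?_
          filter_upwards [cond_absolutelyContinuous.ae_le hZ, hZB] with x hx hxB
          exact hφK _ hx _ hxB
      _ = ε + K * ∫ x, |Z x - ZB x| ∂μ[|B] := by
          rw [integral_add (integrable_const ε) (hdi.const_mul K),
            integral_const, integral_const_mul, probReal_univ, one_smul]
  calc |∫ x, φ (Z x) ∂μ - ∫ x, φ (ZB x) ∂μ[|B]|
      ≤ |∫ x, φ (Z x) ∂μ - ∫ x, φ (Z x) ∂μ[|B]|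
        + |∫ x, φ (Z x) ∂μ[|B] - ∫ x, φ (ZB x) ∂μ[|B]| := abs_sub_le _ _ _
    _ ≤ 2 * M * μ.real Bᶜ + (ε + K * (8 * μ.real Bᶜ)) := by
        gcongr
        exact hcomp.trans (by gcongr)
    _ = ε + (2 * M + 8 * K) * μ.real Bᶜ := by ring

end CondMeasure

section Sequence

variable {Ω ι : Type*} {mΩ : MeasurableSpace Ω} {μ : Measure Ω} [IsProbabilityMeasure μ]
  {l : Filter ι} {B : ι → Set Ω}

lemma tendsto_measureReal_compl_of_tendsto_measure_one (hBm : ∀ i, MeasurableSet (B i))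
    (hB : Tendsto (fun i => μ (B i)) l (𝓝 1)) :
    Tendsto (fun i => μ.real (B i)ᶜ) l (𝓝 0) := by
  have hreal : Tendsto (fun i => μ.real (B i)) l (𝓝 1) := by
    simpa [Function.comp_def, measureReal_def] using
      (ENNReal.tendsto_toReal ENNReal.one_ne_top).comp hB
  simp_rw [probReal_compl_eq_one_sub (hBm _)]
  simpa using hreal.const_sub 1

lemma tendsto_measureReal_cond (hBm : ∀ i, MeasurableSet (B i))
    (hB : Tendsto (fun i => μ (B i)) l (𝓝 1)) {s : Set Ω} (hs : MeasurableSet s) :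
    Tendsto (fun i => μ[|B i].real s) l (𝓝 (μ.real s)) := by
  rw [tendsto_iff_norm_sub_tendsto_zero]
  refine squeeze_zero' (.of_forall fun _ => norm_nonneg _) ?_
    (by simpa using (tendsto_measureReal_compl_of_tendsto_measure_one hBm hB).const_mul 2)
  filter_upwards [hB.eventually_ne one_ne_zero] with i hi
  have := norm_integral_sub_integral_cond_le (hBm i) hi (g := s.indicator (1 : Ω → ℝ)) (C := 1)
    (aestronglyMeasurable_one.indicator hs)
    (.of_forall fun x => (norm_indicator_le_norm_self 1 x).trans_eq norm_one)
  rw [norm_sub_rev]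
  simpa [integral_indicator_one hs] using this

lemma tendsto_integral_comp_condExp_sub_cond {m : ι → MeasurableSpace Ω} (hm : ∀ i, m i ≤ mΩ)
    (hBm : ∀ i, MeasurableSet (B i)) (hB : Tendsto (fun i => μ (B i)) l (𝓝 1)) {φ : ℝ → ℝ}
    (hφ : Continuous φ) {f : Ω → ℝ} (hfm : AEStronglyMeasurable f μ)
    (hf : ∀ᵐ x ∂μ, f x ∈ Icc 0 1) :
    Tendsto (fun i => ∫ x, φ (μ[f|m i] x) ∂μ - ∫ x, φ (μ[|B i][f|m i] x) ∂μ[|B i]) l (𝓝 0) := by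
  obtain ⟨M, hM⟩ := isCompact_Icc.exists_bound_of_continuousOn hφ.continuousOn
  rw [Metric.tendsto_nhds]
  intro ε hε
  obtain ⟨K, hK, hφK⟩ := isCompact_Icc.exists_dist_le_add_mul_dist hφ.continuousOn (half_pos hε)
  have hbound : Tendsto (fun i => ε / 2 + (2 * M + 8 * K) * μ.real (B i)ᶜ) l (𝓝 (ε / 2)) := by
    simpa using ((tendsto_measureReal_compl_of_tendsto_measure_one hBm hB).const_mul
      (2 * M + 8 * K)).const_add (ε / 2)
  filter_upwards [hbound.eventually_lt_const (half_lt_self hε),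
    hB.eventually_ne one_ne_zero] with i hi hi0
  rw [Real.dist_eq, sub_zero]
  exact (abs_integral_comp_condExp_sub_cond_le (hm i) (hBm i) hi0 hφ hM hK hφK hfm hf).trans_lt hi

lemma tendsto_miBool_sub_miBool_cond {E : ι → Type*} [∀ i, MeasurableSpace (E i)]
    {X : Ω → Bool} (hX : Measurable X) {Y : ∀ i, Ω → E i} (hY : ∀ i, Measurable (Y i))
    (hBm : ∀ i, MeasurableSet (B i)) (hB : Tendsto (fun i => μ (B i)) l (𝓝 1)) :
    Tendsto (fun i => miBool μ X (Y i) - miBool μ[|B i] X (Y i)) l (𝓝 0) := by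
  have hf : ∀ᵐ ω ∂μ, (if X ω then (1 : ℝ) else 0) ∈ Icc 0 1 :=
    .of_forall fun ω => by cases X ω <;> simp
  have hfm : Measurable fun ω => if X ω then (1 : ℝ) else 0 :=
    (Measurable.of_discrete (f := fun b : Bool => if b then (1 : ℝ) else 0)).comp hX
  have hS : MeasurableSet {ω | X ω = true} := hX (measurableSet_singleton true)
  have hentropy :=
    (Real.binEntropy_continuous.tendsto _).comp (tendsto_measureReal_cond hBm hB hS)
  have hcond := tendsto_integral_comp_condExp_sub_cond (fun i => (hY i).comap_le) hBm hB
    Real.binEntropy_continuous hfm.aestronglyMeasurable hf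
  have := (hentropy.const_sub (Real.binEntropy (μ.real {ω | X ω = true}))).sub hcond
  rw [sub_self, sub_zero] at this
  refine this.congr fun i => ?_
  simp only [miBool, Function.comp_apply, measureReal_def]
  ring

end Sequence

theorem mutualInfo_tendsto_zero_iff_cond_general
    {Ω : Type*} [MeasurableSpace Ω] (μ : Measure Ω) [IsProbabilityMeasure μ]
    (X : Ω → Bool) (hXmeas : Measurable X)
    (B : ℕ → Set Ω) (hBmeas : ∀ n, MeasurableSet (B n))
    (hB : Tendsto (fun n => μ (B n)) atTop (nhds 1))
    (d : ℕ → ℕ) (Y : (n : ℕ) → Ω → (Fin (d n) → ℝ))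
    (hYmeas : ∀ n, Measurable (Y n)) :
    Tendsto (fun n => miBool μ X (Y n)) atTop (nhds (0 : ℝ)) ↔
      Tendsto (fun n => miBool (μ[|B n]) X (Y n)) atTop (nhds (0 : ℝ)) :=
  tendsto_iff_of_dist <| by
    simpa [dist_eq_norm] using (tendsto_miBool_sub_miBool_cond hXmeas hYmeas hBmeas hB).norm

/-- **Conditioning on high-probability events preserves vanishing mutual information.**
Let `p ∈ (0,1)` and `X ~ Bernoulli(p)` on a probability space `(Ω, F, P)`.  Let
`B_1, B_2, …` be events on the same space with `P(B_n) → 1`, and let `Y_n` be a random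
vector (matrix) on the same space.  Then `I(X; Y_n) → 0` if and only if
`I(X; Y_n | B_n) → 0`, where the conditional mutual information is computed under the
conditional probability measure `P(· | B_n)`. -/
theorem mutualInfo_tendsto_zero_iff_cond
    {Ω : Type*} [MeasurableSpace Ω] (μ : Measure Ω) [IsProbabilityMeasure μ]
    (p : ℝ) (hp0 : 0 < p) (hp1 : p < 1)
    (X : Ω → Bool) (hXmeas : Measurable X)
    (hX : Measure.map X μ = bernoulliBool p)
    (B : ℕ → Set Ω) (hBmeas : ∀ n, MeasurableSet (B n))
    (hB : Tendsto (fun n => μ (B n)) atTop (nhds 1))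
    (d : ℕ → ℕ) (Y : (n : ℕ) → Ω → (Fin (d n) → ℝ))
    (hYmeas : ∀ n, Measurable (Y n)) :
    Tendsto (fun n => miBool μ X (Y n)) atTop (nhds (0 : ℝ)) ↔
      Tendsto (fun n => miBool (μ[|B n]) X (Y n)) atTop (nhds (0 : ℝ)) :=
  mutualInfo_tendsto_zero_iff_cond_general μ X hXmeas B hBmeas hB d Y hYmeas

end
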